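/- Let A = B·C with B, C symmetric N×N real matrices, B positive semidefinite, and suppose Tr A ≠ 0 and S₂(A) = ((N−1)/(2N))·(Tr A)². Then A = (Tr A / N)·Id and B is positive definite. -/

import Mathlib

/-!
Write `B = SᵀS`. Then `M = S C Sᵀ` is symmetric and, by cyclicity of the trace, has the same
`Tr` and `Tr(·²)` as `A = Sᵀ (S C)`. The hypothesis on `S₂` says `N Tr(M²) = (Tr M)²`, the
equality case of Cauchy–Schwarz for the eigenvalues of `M`: indeed `Tr((M - tI)²) = 0` for
`t = Tr A / N`, so `M = tI`. Since `t ≠ 0`, the factors of `(S C) Sᵀ = tI` commute, giving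
`A = tI`; and `B C = tI` makes `B` invertible, hence positive definite.
-/

open Matrix

/-- `S₂(A) = ½((Tr A)² − Tr(A²))`. -/
noncomputable def S2 {N : ℕ} (A : Matrix (Fin N) (Fin N) ℝ) : ℝ :=
  ((trace A) ^ 2 - trace (A * A)) / 2

section ScalarInverse

variable {K R : Type*} [Field K] [Ring R] [Algebra K R] {a b : R} {t : K}

theorem mul_inv_smul_eq_one_of_mul_eq_smul_one (ht : t ≠ 0) (h : a * b = t • 1) :
    a * (t⁻¹ • b) = 1 := by
  rw [mul_smul_comm, h, smul_smul, inv_mul_cancel₀ ht, one_smul]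

variable [IsDedekindFiniteMonoid R]

theorem IsUnit.of_mul_eq_smul_one (ht : t ≠ 0) (h : a * b = t • 1) : IsUnit a :=
  .of_mul_eq_one _ (mul_inv_smul_eq_one_of_mul_eq_smul_one ht h)

theorem mul_eq_smul_one_comm (ht : t ≠ 0) (h : a * b = t • 1) : b * a = t • 1 := by
  have h' := mul_eq_one_comm.mp (mul_inv_smul_eq_one_of_mul_eq_smul_one ht h)
  rw [smul_mul_assoc] at h'
  rw [← h', smul_smul, mul_inv_cancel₀ ht, one_smul]

end ScalarInverse

namespace Matrix

variable {n : Type*} [Fintype n]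

theorem trace_mul_mul_self_comm {R : Type*} [CommRing R] (X Y : Matrix n n R) :
    trace (X * Y * (X * Y)) = trace (Y * X * (Y * X)) := by
  rw [← Matrix.mul_assoc, trace_mul_comm, Matrix.mul_assoc, Matrix.mul_assoc]

theorem IsSymm.mul_mul_transpose {R : Type*} [CommSemiring R] {C : Matrix n n R}
    (hC : C.IsSymm) (S : Matrix n n R) : (S * C * Sᵀ).IsSymm := by
  rw [IsSymm, transpose_mul, transpose_mul, transpose_transpose, hC.eq, Matrix.mul_assoc]

theorem IsSymm.eq_smul_one_of_card_mul_trace_mul_self_eq [DecidableEq n] {M : Matrix n n ℝ}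
    (hM : M.IsSymm) (h : Fintype.card n * trace (M * M) = trace M ^ 2) :
    M = (trace M / Fintype.card n) • 1 := by
  cases isEmpty_or_nonempty n
  · exact Subsingleton.elim _ _
  have hcard : (Fintype.card n : ℝ) ≠ 0 := Nat.cast_ne_zero.mpr Fintype.card_ne_zero
  rw [← sub_eq_zero, ← trace_conjTranspose_mul_self_eq_zero_iff,
    conjTranspose_eq_transpose_of_trivial, transpose_sub, hM.eq, transpose_smul, transpose_one]
  simp only [sub_mul, mul_sub, Matrix.smul_mul, Matrix.mul_smul, Matrix.one_mul, Matrix.mul_one,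
    trace_sub, trace_smul, trace_one, smul_eq_mul]
  field_simp
  linear_combination h

open scoped MatrixOrder in
theorem PosSemidef.exists_eq_transpose_mul_self [DecidableEq n] {B : Matrix n n ℝ}
    (hB : B.PosSemidef) : ∃ S, B = Sᵀ * S :=
  CStarAlgebra.nonneg_iff_eq_star_mul_self.mp hB.nonneg

end Matrix

theorem S2_eq_iff {N : ℕ} (hN : (N : ℝ) ≠ 0) (A : Matrix (Fin N) (Fin N) ℝ) :
    S2 A = ((N - 1 : ℝ) / (2 * N)) * trace A ^ 2 ↔ N * trace (A * A) = trace A ^ 2 := by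
  rw [S2]
  constructor <;> intro h <;> field_simp at h ⊢
  · linear_combination -h
  · linear_combination -h

theorem stmt_1_general {N : ℕ} (A B C : Matrix (Fin N) (Fin N) ℝ)
    (hC : C.IsSymm) (hBpsd : B.PosSemidef) (hA : A = B * C)
    (htr : trace A ≠ 0)
    (heq : S2 A = ((N - 1 : ℝ) / (2 * N)) * (trace A) ^ 2) :
    A = (trace A / N) • (1 : Matrix (Fin N) (Fin N) ℝ) ∧ B.PosDef := by
  have hN : (N : ℝ) ≠ 0 := by
    rintro h
    obtain rfl : N = 0 := by exact_mod_cast h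
    exact htr (by simp [trace])
  have ht : trace A / N ≠ 0 := div_ne_zero htr hN
  obtain ⟨S, rfl⟩ := hBpsd.exists_eq_transpose_mul_self
  rw [Matrix.mul_assoc] at hA
  have hM : S * C * Sᵀ = (trace A / N) • 1 := by
    have htrM : trace (S * C * Sᵀ) = trace A := by
      rw [hA, trace_mul_comm]
    have htrMM : trace (S * C * Sᵀ * (S * C * Sᵀ)) = trace (A * A) := by
      rw [hA, trace_mul_mul_self_comm]
    have hM := (hC.mul_mul_transpose S).eq_smul_one_of_card_mul_trace_mul_self_eq
    rw [Fintype.card_fin, htrM, htrMM] at hM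
    exact hM ((S2_eq_iff hN A).mp heq)
  have hAt : A = (trace A / N) • 1 := hA.trans (mul_eq_smul_one_comm ht hM)
  have hBC : Sᵀ * S * C = (trace A / N) • 1 := by rwa [Matrix.mul_assoc, ← hA]
  exact ⟨hAt, hBpsd.posDef_iff_isUnit.mpr (.of_mul_eq_smul_one ht hBC)⟩

/-- Equality case of the generalized Newton inequality: if `A = B·C` with `B`, `C`
symmetric, `B` positive semidefinite, `Tr A ≠ 0` and `S₂(A) = ((N−1)/(2N))·(Tr A)²`,
then `A = (Tr A / N)·Id` and `B` is positive definite. -/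
theorem stmt_1 {N : ℕ} (hN : 1 ≤ N) (A B C : Matrix (Fin N) (Fin N) ℝ)
    (hB : B.IsSymm) (hC : C.IsSymm) (hBpsd : B.PosSemidef) (hA : A = B * C)
    (htr : trace A ≠ 0)
    (heq : S2 A = ((N - 1 : ℝ) / (2 * N)) * (trace A) ^ 2) :
    A = (trace A / N) • (1 : Matrix (Fin N) (Fin N) ℝ) ∧ B.PosDef :=
  stmt_1_general A B C hC hBpsd hA htr heq
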